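/- arXiv:2502.08548 — 13 statements merged into one kernel-verified Lean document; each statement's English description precedes it below -/
import Mathlib

section
/- Under the standing assumptions, for every β with 0 ≤ β ≤ 1 one has D(β) > 0, L1(β) > 0, and L2(β) > 0. -/
/-!
Each of `D`, `L1`, `L2` is affine and nonincreasing in `β` (because `δ < α` and `t < v`),
so it suffices to check positivity at `β = 1`. There `D = δ (4 - 3α)` and
`L1 = t (α - δ + αδ) + 2δv (1 - α)` are visibly positive, while
`L2 = (2 - α) δ v - t (α - δ + αδ)` is positive exactly when `v` exceeds a threshold that lies
below `t (α / ((2 - α) δ) + 1 / 2)`, the gap being `t δ (4 - 3α) / 2`.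
-/

namespace StandingAssumptions

def D (α δ β : ℝ) : ℝ := 2 * (α + δ) - 3 * α * δ - 2 * β * (α - δ)

def L1 (t v α δ β : ℝ) : ℝ :=
  α * δ * (t - 2 * v) + v * (α + δ) - β * (α - δ) * (v - t)

def L2 (t v α δ β : ℝ) : ℝ :=
  v * (α + δ) - α * δ * (t + v) - β * (α - δ) * (t + v)

variable {t v α δ : ℝ}

theorem D_antitone (hδα : δ ≤ α) : Antitone (D α δ) := fun _ _ h => by
  unfold D; nlinarith

theorem L1_antitone (hδα : δ ≤ α) (htv : t ≤ v) : Antitone (L1 t v α δ) := by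
  intro _ _ h
  unfold L1; nlinarith [mul_nonneg (sub_nonneg.mpr hδα) (sub_nonneg.mpr htv)]

theorem L2_antitone (hδα : δ ≤ α) (htv : 0 ≤ t + v) : Antitone (L2 t v α δ) := by
  intro _ _ h
  unfold L2; nlinarith [mul_nonneg (sub_nonneg.mpr hδα) htv]

theorem D_one_pos (hδ : 0 < δ) (hα : α < 1) : 0 < D α δ 1 := by
  have h : D α δ 1 = δ * (4 - 3 * α) := by unfold D; ring
  rw [h]; nlinarith

theorem L1_one_pos (ht : 0 < t) (hv : 0 < v) (hδ : 0 < δ) (hδα : δ < α) (hα : α < 1) :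
    0 < L1 t v α δ 1 := by
  have h : L1 t v α δ 1 = t * (α - δ + α * δ) + 2 * δ * v * (1 - α) := by
    unfold L1; ring
  rw [h]
  have : 0 < α - δ + α * δ := by nlinarith
  have : 0 < 2 * δ * v * (1 - α) := by
    have := sub_pos.mpr hα
    positivity
  nlinarith

theorem threshold_mul_lt {d : ℝ} (hd : 0 < d) (hv : t * (α / d + 1 / 2) < v) :
    t * α + t * d / 2 < v * d := by
  have h := mul_lt_mul_of_pos_right hv hd
  rw [mul_assoc, add_mul, div_mul_cancel₀ _ hd.ne'] at h
  linarith

theorem lt_of_threshold_lt (ht : 0 < t) (hδ : 0 < δ) (hδα : δ < α) (hα : α < 1)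
    (hv : t * (α / ((2 - α) * δ) + 1 / 2) < v) : t < v := by
  have hd : 0 < (2 - α) * δ := by nlinarith
  have h := threshold_mul_lt hd hv
  nlinarith [mul_pos ht hδ, mul_pos ht (sub_pos.mpr hδα)]

theorem L2_one_pos (ht : 0 < t) (hδ : 0 < δ) (hα : α < 1)
    (hv : t * (α / ((2 - α) * δ) + 1 / 2) < v) : 0 < L2 t v α δ 1 := by
  have hd : 0 < (2 - α) * δ := by nlinarith
  have h := threshold_mul_lt hd hv
  have hL : L2 t v α δ 1 = (2 - α) * δ * v - t * (α - δ + α * δ) := by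
    unfold L2; ring
  have hgap : 0 < t * δ * (4 - 3 * α) := by
    have : 0 < 4 - 3 * α := by linarith
    positivity
  rw [hL]; nlinarith

end StandingAssumptions

theorem stmt_0_general (t v α δ : ℝ) (ht : 0 < t) (hδ : 0 < δ) (hδα : δ < α) (hα : α < 1)
    (hv1 : t * (α / ((2 - α) * δ) + 1 / 2) < v)
    (β : ℝ) (hβ1 : β ≤ 1) :
    0 < 2 * (α + δ) - 3 * α * δ - 2 * β * (α - δ) ∧
    0 < α * δ * (t - 2 * v) + v * (α + δ) - β * (α - δ) * (v - t) ∧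
    0 < v * (α + δ) - α * δ * (t + v) - β * (α - δ) * (t + v) := by
  open StandingAssumptions in
  have htv : t < v := lt_of_threshold_lt ht hδ hδα hα hv1
  exact ⟨(D_one_pos hδ hα).trans_le (D_antitone hδα.le hβ1),
    (L1_one_pos ht (ht.trans htv) hδ hδα hα).trans_le (L1_antitone hδα.le htv.le hβ1),
    (L2_one_pos ht hδ hα hv1).trans_le (L2_antitone hδα.le (by linarith) hβ1)⟩

/-- Under the standing assumptions, for every β with 0 ≤ β ≤ 1 one has
D(β) > 0, L1(β) > 0, and L2(β) > 0. -/
theorem stmt_0 (t v α δ : ℝ) (ht : 0 < t) (hδ : 0 < δ) (hδα : δ < α) (hα : α < 1)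
    (hv1 : t * (α / ((2 - α) * δ) + 1 / 2) < v) (hv2 : v < 2 * t)
    (β : ℝ) (hβ0 : 0 ≤ β) (hβ1 : β ≤ 1) :
    0 < 2 * (α + δ) - 3 * α * δ - 2 * β * (α - δ) ∧
    0 < α * δ * (t - 2 * v) + v * (α + δ) - β * (α - δ) * (v - t) ∧
    0 < v * (α + δ) - α * δ * (t + v) - β * (α - δ) * (t + v) :=
  stmt_0_general t v α δ ht hδ hδα hα hv1 β hβ1
end

section
/- Under the standing assumptions, for every β with 0 ≤ β ≤ 1 one has L3(β) > 0. -/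
set_option maxHeartbeats 1000000 in
/-- Under the standing assumptions, for every β with 0 ≤ β ≤ 1 one has L3(β) > 0. -/
theorem stmt_1 (t v α δ : ℝ) (ht : 0 < t) (hδ : 0 < δ) (hδα : δ < α) (hα : α < 1)
    (hv1 : t * (α / ((2 - α) * δ) + 1 / 2) < v) (hv2 : v < 2 * t)
    (β : ℝ) (hβ0 : 0 ≤ β) (hβ1 : β ≤ 1) :
    0 < α * (v * (1 - β ^ 2) - (3 - β) * β * t) -
        δ * (t * (α * (1 - 2 * β) + β * (1 + β)) - (β + 1) * v * (1 - α + β)) := by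
  have hαpos : 0 < α := lt_trans hδ hδα
  have h2α : 0 < 2 - α := by linarith
  have hd : 0 < (2 - α) * δ := by positivity
  have key : 0 < (v - t / 2) * ((2 - α) * δ) - t * α := by
    have h1 : t * α / ((2 - α) * δ) < v - t / 2 := by
      have he : t * (α / ((2 - α) * δ)) = t * α / ((2 - α) * δ) := by ring
      nlinarith [hv1]
    have h2 := mul_lt_mul_of_pos_right h1 hd
    have he : t * α / ((2 - α) * δ) * ((2 - α) * δ) = t * α := by field_simp
    linarith [he ▸ h2]
  have hvt : t / 2 < v := by
    have : 0 < α / ((2 - α) * δ) := by positivity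
    nlinarith [hv1]
  have hf1 : 0 < (2 - α) * δ * (2 * v - t) - 2 * α * t := by nlinarith [key]
  have hf0 : 0 < α * v - α * δ * t + (1 - α) * δ * v := by
    nlinarith [key, mul_pos ht hδ, mul_pos hδ (sub_pos.2 hvt), mul_pos hαpos key,
      mul_pos hδ key, mul_pos ht hαpos, mul_pos hδ hδ]
  have hA : (α - δ) * (t - v) < α * v - α * δ * t + (1 - α) * δ * v := by
    have hk2 : 0 < α * (2 - δ) * ((v - t / 2) * ((2 - α) * δ) - t * α) := by
      have h0 : 0 < α * (2 - δ) := by nlinarith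
      exact mul_pos h0 key
    have hpoly : 0 < t * (2 * α^2 - α^2 * δ + 2 * δ^2 - 4 * α * δ^2 + 1.5 * α^2 * δ^2) := by
      have h1 : α^2 * δ < α^2 := by nlinarith [mul_pos (mul_pos hαpos hαpos) (show (0:ℝ) < 1 - δ by linarith)]
      have h2 : (0:ℝ) ≤ 1.5 * α^2 - 4 * α + 2.5 := by nlinarith [sq_nonneg (α - 1)]
      have h3 : (0:ℝ) ≤ δ^2 * (1.5 * α^2 - 4 * α + 2.5) := mul_nonneg (sq_nonneg δ) h2
      have h4 : δ^2 < α^2 := by nlinarith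
      nlinarith
    have hmul : 0 < (2 - α) * δ * ((α * v - α * δ * t + (1 - α) * δ * v) - (α - δ) * (t - v)) := by
      linarith [hk2, hpoly]
    rcases mul_pos_iff.mp hmul with ⟨_, h⟩ | ⟨h1, _⟩
    · linarith
    · linarith
  have hdecomp : α * (v * (1 - β ^ 2) - (3 - β) * β * t) -
      δ * (t * (α * (1 - 2 * β) + β * (1 + β)) - (β + 1) * v * (1 - α + β)) =
      (1 - β) * ((α * v - α * δ * t + (1 - α) * δ * v) - (α - δ) * (t - v) * β) +
      β * ((2 - α) * δ * (2 * v - t) - 2 * α * t) := by ring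
  rw [hdecomp]
  have hq : 0 < (α * v - α * δ * t + (1 - α) * δ * v) - (α - δ) * (t - v) * β := by
    rcases le_or_gt ((α - δ) * (t - v)) 0 with h | h
    · linarith [mul_nonpos_of_nonpos_of_nonneg h hβ0, hf0]
    · linarith [mul_le_of_le_one_right h.le hβ1, hf0, hA]
  rcases le_or_gt β (1/2) with h | h
  · linarith [mul_nonneg hβ0 hf1.le, mul_nonneg (by linarith : (0:ℝ) ≤ 1/2 - β) hq.le, hq]
  · linarith [mul_nonneg (by linarith : (0:ℝ) ≤ 1 - β) hq.le, mul_nonneg (by linarith : (0:ℝ) ≤ β - 1/2) hf1.le, hf1]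
end

section
/- Under the standing assumptions, for every β with 0 ≤ β ≤ 1 the equilibrium bids satisfy 0 ≤ bL(β) ≤ bH(β) and bH(β) > 0. -/
/-!
Each of `D`, `L₁`, `L₂` is affine in `β` and decreases as `β` grows, so it suffices to check
positivity at `β = 1`: there `D = δ (4 - 3α)`, `L₁ = t (αδ + α - δ) + 2vδ (1 - α)`, and
`L₂ = vδ (2 - α) - t (αδ + α - δ)`, the last being positive by the lower bound on `v`.
With `D, L₁, L₂ > 0`, the low bid is a product of nonnegative factors, the high bid adds a
nonnegative term, and at least one of the weights `1 - β`, `β` is positive.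
-/

noncomputable section

namespace EquilibriumBids

def D (α δ β : ℝ) : ℝ := 2 * (α + δ) - 3 * α * δ - 2 * β * (α - δ)

def L₁ (t v α δ β : ℝ) : ℝ := α * δ * (t - 2 * v) + v * (α + δ) - β * (α - δ) * (v - t)

def L₂ (t v α δ β : ℝ) : ℝ := v * (α + δ) - α * δ * (t + v) - β * (α - δ) * (t + v)

def lowBid (t v α δ r β : ℝ) : ℝ :=
  L₁ t v α δ β * L₂ t v α δ β * (1 - β) * (1 - r) * (α - δ) / (t * D α δ β ^ 2)

def highBid (t v α δ r β : ℝ) : ℝ :=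
  lowBid t v α δ r β + L₁ t v α δ β * β * (1 - r) * (α - δ) / D α δ β

lemma mul_lt_of_threshold_lt {t v α δ : ℝ} (hδ : 0 < δ) (hα : α < 1)
    (hv : t * (α / ((2 - α) * δ) + 1 / 2) < v) :
    t * (2 * α + (2 - α) * δ) < 2 * ((2 - α) * δ) * v := by
  have h2α : 0 < 2 - α := by linarith
  have hpos : 0 < (2 - α) * δ := mul_pos h2α hδ
  have h := mul_lt_mul_of_pos_right hv (mul_pos two_pos hpos)
  have e : t * (α / ((2 - α) * δ) + 1 / 2) * (2 * ((2 - α) * δ)) =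
      t * (2 * α + (2 - α) * δ) := by
    field_simp [h2α.ne', hδ.ne']
  linarith

lemma lt_of_threshold_lt {t v α δ : ℝ} (ht : 0 < t) (hδ : 0 < δ) (hδα : δ < α) (hα : α < 1)
    (hv : t * (α / ((2 - α) * δ) + 1 / 2) < v) : t < v := by
  have h := mul_lt_of_threshold_lt hδ hα hv
  by_contra! hvt
  have hpos : 0 ≤ (2 - α) * δ := mul_nonneg (by linarith) hδ.le
  nlinarith [mul_nonneg (sub_nonneg.mpr hvt) hpos, mul_pos ht (sub_pos.mpr hδα),
    mul_pos (mul_pos ht hδ) (hδ.trans hδα)]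

lemma D_pos {α δ β : ℝ} (hδ : 0 < δ) (hδα : δ < α) (hα : α < 1) (hβ : β ≤ 1) :
    0 < D α δ β := by
  have h : D α δ β = δ * (4 - 3 * α) + 2 * (1 - β) * (α - δ) := by unfold D; ring
  rw [h]
  have : 0 ≤ 2 * (1 - β) * (α - δ) := by have := sub_pos.mpr hδα; positivity
  nlinarith

lemma L₁_pos {t v α δ β : ℝ} (ht : 0 < t) (hδ : 0 < δ) (hδα : δ < α) (hα : α < 1)
    (htv : t < v) (hβ : β ≤ 1) : 0 < L₁ t v α δ β := by
  have h : L₁ t v α δ β =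
      t * (α * δ + (α - δ)) + 2 * v * δ * (1 - α) + (1 - β) * (α - δ) * (v - t) := by
    unfold L₁; ring
  rw [h]
  have hαδ := sub_pos.mpr hδα
  have hvt := sub_pos.mpr htv
  have hα' := sub_pos.mpr hα
  have := hδ.trans hδα
  have := sub_nonneg.mpr hβ
  have : 0 < v := ht.trans htv
  positivity

lemma L₂_pos {t v α δ β : ℝ} (ht : 0 < t) (hδ : 0 < δ) (hδα : δ < α) (hα : α < 1)
    (htv : t < v) (hv : t * (2 * α + (2 - α) * δ) < 2 * ((2 - α) * δ) * v) (hβ : β ≤ 1) :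
    0 < L₂ t v α δ β := by
  have h : L₂ t v α δ β =
      v * δ * (2 - α) - t * (α * δ + (α - δ)) + (1 - β) * (α - δ) * (t + v) := by
    unfold L₂; ring
  rw [h]
  have : 0 ≤ (1 - β) * (α - δ) * (t + v) := by
    have := sub_nonneg.mpr hβ
    have := sub_pos.mpr hδα
    have : 0 < t + v := by linarith
    positivity
  nlinarith [mul_pos (mul_pos ht hδ) (show 0 < 4 - 3 * α by linarith)]

section Bids

variable {t v α δ r β : ℝ}

lemma lowBid_nonneg (ht : 0 < t) (hδα : δ < α) (hr : r < 1) (hβ : β ≤ 1)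
    (hL₁ : 0 < L₁ t v α δ β) (hL₂ : 0 < L₂ t v α δ β) : 0 ≤ lowBid t v α δ r β := by
  have := sub_nonneg.mpr hβ
  have := sub_pos.mpr hr
  have := sub_pos.mpr hδα
  unfold lowBid
  positivity

lemma lowBid_pos (ht : 0 < t) (hδα : δ < α) (hr : r < 1) (hβ : β < 1)
    (hD : 0 < D α δ β) (hL₁ : 0 < L₁ t v α δ β) (hL₂ : 0 < L₂ t v α δ β) :
    0 < lowBid t v α δ r β := by
  have := sub_pos.mpr hβ
  have := sub_pos.mpr hr
  have := sub_pos.mpr hδα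
  unfold lowBid
  positivity

lemma highBid_sub_lowBid_nonneg (hδα : δ < α) (hr : r < 1) (hβ : 0 ≤ β)
    (hD : 0 < D α δ β) (hL₁ : 0 < L₁ t v α δ β) :
    0 ≤ highBid t v α δ r β - lowBid t v α δ r β := by
  have := sub_pos.mpr hr
  have := sub_pos.mpr hδα
  rw [highBid, add_sub_cancel_left]
  positivity

lemma highBid_sub_lowBid_pos (hδα : δ < α) (hr : r < 1) (hβ : 0 < β)
    (hD : 0 < D α δ β) (hL₁ : 0 < L₁ t v α δ β) :
    0 < highBid t v α δ r β - lowBid t v α δ r β := by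
  have := sub_pos.mpr hr
  have := sub_pos.mpr hδα
  rw [highBid, add_sub_cancel_left]
  positivity

lemma highBid_pos (ht : 0 < t) (hδα : δ < α) (hr : r < 1) (hβ0 : 0 ≤ β) (hβ1 : β ≤ 1)
    (hD : 0 < D α δ β) (hL₁ : 0 < L₁ t v α δ β) (hL₂ : 0 < L₂ t v α δ β) :
    0 < highBid t v α δ r β := by
  rcases hβ1.lt_or_eq with hβ | rfl
  · linarith [lowBid_pos (r := r) ht hδα hr hβ hD hL₁ hL₂,
      highBid_sub_lowBid_nonneg (r := r) hδα hr hβ0 hD hL₁]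
  · linarith [lowBid_nonneg (r := r) ht hδα hr le_rfl hL₁ hL₂,
      highBid_sub_lowBid_pos (r := r) hδα hr one_pos hD hL₁]

end Bids

end EquilibriumBids

end

open EquilibriumBids in
theorem stmt_2_general (t v α δ r : ℝ) (ht : 0 < t) (hδ : 0 < δ) (hδα : δ < α) (hα : α < 1)
    (hr1 : r < 1)
    (hv1 : t * (α / ((2 - α) * δ) + 1 / 2) < v)
    (β : ℝ) (hβ0 : 0 ≤ β) (hβ1 : β ≤ 1) :
    let D := 2 * (α + δ) - 3 * α * δ - 2 * β * (α - δ)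
    let L1 := α * δ * (t - 2 * v) + v * (α + δ) - β * (α - δ) * (v - t)
    let L2 := v * (α + δ) - α * δ * (t + v) - β * (α - δ) * (t + v)
    let bL := L1 * L2 * (1 - β) * (1 - r) * (α - δ) / (t * D ^ 2)
    let bH := bL + L1 * β * (1 - r) * (α - δ) / D
    0 ≤ bL ∧ bL ≤ bH ∧ 0 < bH := by
  have hD := D_pos hδ hδα hα hβ1
  have htv := lt_of_threshold_lt ht hδ hδα hα hv1
  have hL₁ := L₁_pos ht hδ hδα hα htv hβ1
  have hL₂ := L₂_pos ht hδ hδα hα htv (mul_lt_of_threshold_lt hδ hα hv1) hβ1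
  exact ⟨lowBid_nonneg ht hδα hr1 hβ1 hL₁ hL₂,
    sub_nonneg.mp (highBid_sub_lowBid_nonneg hδα hr1 hβ0 hD hL₁),
    highBid_pos ht hδα hr1 hβ0 hβ1 hD hL₁ hL₂⟩

/-- Under the standing assumptions, for every β with 0 ≤ β ≤ 1 the equilibrium
bids satisfy 0 ≤ bL(β) ≤ bH(β) and bH(β) > 0. -/
theorem stmt_2 (t v α δ r : ℝ) (ht : 0 < t) (hδ : 0 < δ) (hδα : δ < α) (hα : α < 1)
    (hr0 : 0 < r) (hr1 : r < 1)
    (hv1 : t * (α / ((2 - α) * δ) + 1 / 2) < v) (hv2 : v < 2 * t)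
    (β : ℝ) (hβ0 : 0 ≤ β) (hβ1 : β ≤ 1) :
    let D := 2 * (α + δ) - 3 * α * δ - 2 * β * (α - δ)
    let L1 := α * δ * (t - 2 * v) + v * (α + δ) - β * (α - δ) * (v - t)
    let L2 := v * (α + δ) - α * δ * (t + v) - β * (α - δ) * (t + v)
    let bL := L1 * L2 * (1 - β) * (1 - r) * (α - δ) / (t * D ^ 2)
    let bH := bL + L1 * β * (1 - r) * (α - δ) / D
    0 ≤ bL ∧ bL ≤ bH ∧ 0 < bH :=
  stmt_2_general t v α δ r ht hδ hδα hα hr1 hv1 β hβ0 hβ1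
end

section
/- Under the standing assumptions, for every β with 0 ≤ β ≤ 1 the equilibrium purchase thresholds satisfy 0 < zB*(β) < 1/2 < zA*(β) < 1. -/
/-!
Both bounds reduce, after clearing the positive denominator `t * D(β)`, to the positivity of an
expression affine in `β`:
`t D - N = (2t - v)(α + δ - αδ) + (v - t) β (α - δ)` and
`2N - t D = 2((2 - α) δ (v - t/2) - t α) + 2v (1 - β)(α - δ)`, where `N` is the numerator of
`zA*`. The lower bound on `v` is exactly the positivity of the constant term of the second one,
and it also forces `t < v`.
-/

namespace PurchaseThreshold

noncomputable section

def denom (α δ β : ℝ) : ℝ := 2 * (α + δ) - 3 * α * δ - 2 * β * (α - δ)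

def zA (t v α δ β : ℝ) : ℝ :=
  (v * (α + δ) - (t + v) * (β * (α - δ) + α * δ)) / (t * denom α δ β)

variable {t v α δ β : ℝ}

theorem denom_pos (hδ : 0 < δ) (hδα : δ < α) (hα : α < 1) (hβ1 : β ≤ 1) :
    0 < denom α δ β := by
  have hsplit : denom α δ β = δ * (4 - 3 * α) + 2 * ((1 - β) * (α - δ)) := by
    unfold denom; ring
  have hslack : 0 ≤ (1 - β) * (α - δ) := mul_nonneg (by linarith) (by linarith)
  rw [hsplit]
  linarith [mul_pos hδ (show 0 < 4 - 3 * α by linarith)]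

theorem margin_pos_of_lt (hδ : 0 < δ) (hα : α < 1)
    (hv : t * (α / ((2 - α) * δ) + 1 / 2) < v) :
    t * α < (2 - α) * δ * (v - t / 2) := by
  have hc : 0 < (2 - α) * δ := mul_pos (by linarith) hδ
  have hexp : t * (α / ((2 - α) * δ) + 1 / 2) * ((2 - α) * δ)
      = t * α + (2 - α) * δ * (t / 2) := by
    rw [mul_assoc, add_mul, div_mul_cancel₀ _ hc.ne']
    ring
  linarith [mul_lt_mul_of_pos_right hv hc]

theorem lt_of_margin_pos (ht : 0 < t) (hδ : 0 < δ) (hδα : δ < α) (hα : α < 1)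
    (hmargin : t * α < (2 - α) * δ * (v - t / 2)) : t < v := by
  by_contra! hvt
  have hcmp : (2 - α) * δ * (v - t / 2) ≤ (2 - α) * δ * (t / 2) :=
    mul_le_mul_of_nonneg_left (by linarith) (mul_pos (by linarith) hδ).le
  have hsmall : (2 - α) * δ * (t / 2) < t * α := by
    nlinarith [mul_lt_mul_of_pos_left hδα ht, mul_pos (mul_pos ht hδ) (hδ.trans hδα)]
  linarith

theorem zA_lt_one (ht : 0 < t) (hδ : 0 < δ) (hδα : δ < α) (hα : α < 1)
    (hvt : t < v) (hv2 : v < 2 * t) (hβ0 : 0 ≤ β) (hβ1 : β ≤ 1) :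
    zA t v α δ β < 1 := by
  rw [zA, div_lt_one (mul_pos ht (denom_pos hδ hδα hα hβ1))]
  have hgap : t * denom α δ β - (v * (α + δ) - (t + v) * (β * (α - δ) + α * δ))
      = (2 * t - v) * (α + δ - α * δ) + (v - t) * β * (α - δ) := by
    unfold denom; ring
  have h1 : 0 < (2 * t - v) * (α + δ - α * δ) :=
    mul_pos (by linarith) (by nlinarith)
  have h2 : 0 ≤ (v - t) * β * (α - δ) :=
    mul_nonneg (mul_nonneg (by linarith) hβ0) (by linarith)
  linarith

theorem half_lt_zA (ht : 0 < t) (hδ : 0 < δ) (hδα : δ < α) (hα : α < 1)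
    (hvt : t < v) (hmargin : t * α < (2 - α) * δ * (v - t / 2)) (hβ1 : β ≤ 1) :
    1 / 2 < zA t v α δ β := by
  rw [zA, lt_div_iff₀ (mul_pos ht (denom_pos hδ hδα hα hβ1))]
  have hgap : 2 * (v * (α + δ) - (t + v) * (β * (α - δ) + α * δ)) - t * denom α δ β
      = 2 * ((2 - α) * δ * (v - t / 2) - t * α) + 2 * (v * (1 - β) * (α - δ)) := by
    unfold denom; ring
  have hslack : 0 ≤ v * (1 - β) * (α - δ) :=
    mul_nonneg (mul_nonneg (by linarith) (by linarith)) (by linarith)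
  linarith

end

end PurchaseThreshold

/-- Under the standing assumptions, for every β with 0 ≤ β ≤ 1 the equilibrium
purchase thresholds satisfy 0 < zB*(β) < 1/2 < zA*(β) < 1. -/
theorem stmt_3 (t v α δ : ℝ) (ht : 0 < t) (hδ : 0 < δ) (hδα : δ < α) (hα : α < 1)
    (hv1 : t * (α / ((2 - α) * δ) + 1 / 2) < v) (hv2 : v < 2 * t)
    (β : ℝ) (hβ0 : 0 ≤ β) (hβ1 : β ≤ 1) :
    let D := 2 * (α + δ) - 3 * α * δ - 2 * β * (α - δ)
    let zA := (v * (α + δ) - (t + v) * (β * (α - δ) + α * δ)) / (t * D)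
    let zB := 1 - zA
    0 < zB ∧ zB < 1 / 2 ∧ 1 / 2 < zA ∧ zA < 1 := by
  intro D zA zB
  have hmargin := PurchaseThreshold.margin_pos_of_lt hδ hα hv1
  have hvt := PurchaseThreshold.lt_of_margin_pos ht hδ hδα hα hmargin
  have hlt : zA < 1 := PurchaseThreshold.zA_lt_one ht hδ hδα hα hvt hv2 hβ0 hβ1
  have hgt : 1 / 2 < zA := PurchaseThreshold.half_lt_zA ht hδ hδα hα hvt hmargin hβ1
  exact ⟨by linarith, by linarith, hgt, hlt⟩
end

section
/- Under the standing assumptions, the low bid bL is strictly decreasing in the targeting precision: for all β1, β2 with 0 ≤ β1 < β2 ≤ 1, bL(β2) < bL(β1). -/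
private lemma aux_stmt4 (v d1 d2 e1 e2 a b : ℝ) (ha : 0 ≤ a) (hab : a < b)
    (hd2 : 0 < d2) (hd : d2 < d1) (he1 : 0 < e1) (he : e1 < e2) (hL : e2 < v * d2) :
    a * ((v * d2 - e2) * (v * d2 + e2) * d1 ^ 2) <
      b * ((v * d1 - e1) * (v * d1 + e1) * d2 ^ 2) := by
  have he2 : 0 < e2 := he1.trans he
  have hd1 : 0 < d1 := hd2.trans hd
  have h1 : 0 < v * d2 - e2 := by linarith
  have h2 : 0 < v * d2 + e2 := by linarith
  have hP2 : 0 < (v * d2 - e2) * (v * d2 + e2) * d1 ^ 2 :=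
    mul_pos (mul_pos h1 h2) (pow_pos hd1 2)
  have h0 : e1 * d2 < e2 * d1 := by nlinarith
  have hsq : (e1 * d2) * (e1 * d2) < (e2 * d1) * (e2 * d1) :=
    mul_self_lt_mul_self (by positivity) h0
  have hle : (v * d2 - e2) * (v * d2 + e2) * d1 ^ 2 ≤
      (v * d1 - e1) * (v * d1 + e1) * d2 ^ 2 := by nlinarith [hsq]
  calc a * ((v * d2 - e2) * (v * d2 + e2) * d1 ^ 2)
      < b * ((v * d2 - e2) * (v * d2 + e2) * d1 ^ 2) :=
        mul_lt_mul_of_pos_right hab hP2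
    _ ≤ b * ((v * d1 - e1) * (v * d1 + e1) * d2 ^ 2) :=
        mul_le_mul_of_nonneg_left hle (by linarith)

set_option maxHeartbeats 2000000 in
/-- Under the standing assumptions, the low bid bL is strictly decreasing in the
targeting precision. -/
theorem stmt_4 (t v α δ r : ℝ) (ht : 0 < t) (hδ : 0 < δ) (hδα : δ < α) (hα : α < 1)
    (hr0 : 0 < r) (hr1 : r < 1)
    (hv1 : t * (α / ((2 - α) * δ) + 1 / 2) < v) (hv2 : v < 2 * t) :
    let bL : ℝ → ℝ := fun β =>
      (α * δ * (t - 2 * v) + v * (α + δ) - β * (α - δ) * (v - t)) *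
        (v * (α + δ) - α * δ * (t + v) - β * (α - δ) * (t + v)) *
        (1 - β) * (1 - r) * (α - δ) /
        (t * (2 * (α + δ) - 3 * α * δ - 2 * β * (α - δ)) ^ 2)
    ∀ β1 β2 : ℝ, 0 ≤ β1 → β1 < β2 → β2 ≤ 1 → bL β2 < bL β1 := by
  intro bL β1 β2 hb1 h12 hb2
  have hαδ : 0 < α - δ := sub_pos.2 hδα
  have hα0 : 0 < α := hδ.trans hδα
  have hp : 0 < (2 - α) * δ := mul_pos (by linarith) hδ
  have hv1' : t * α < (v - t / 2) * ((2 - α) * δ) := by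
    rw [show t * (α / ((2 - α) * δ) + 1 / 2) = t * α / ((2 - α) * δ) + t / 2 by ring] at hv1
    have h := (div_lt_iff₀ hp).mp (by linarith : t * α / ((2 - α) * δ) < v - t / 2)
    linarith
  have htv : t < v := by nlinarith [mul_pos ht hδ, mul_pos ht hαδ, mul_pos hδ (by linarith : (0:ℝ) < 2 - α)]
  have hb1' : β1 ≤ 1 := le_of_lt (lt_of_lt_of_le h12 hb2)
  -- positivity of denominators' bases
  have hd2pos : 0 < 2 * (α + δ) - 3 * α * δ - 2 * β2 * (α - δ) := by
    nlinarith [mul_pos hδ (by linarith : (0:ℝ) < 4 - 3 * α),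
      mul_nonneg (by linarith : (0:ℝ) ≤ 1 - β2) hαδ.le]
  have hd1pos : 0 < 2 * (α + δ) - 3 * α * δ - 2 * β1 * (α - δ) := by
    nlinarith [mul_pos hδ (by linarith : (0:ℝ) < 4 - 3 * α),
      mul_nonneg (by linarith : (0:ℝ) ≤ 1 - β1) hαδ.le]
  have hd21 : 2 * (α + δ) - 3 * α * δ - 2 * β2 * (α - δ)
      < 2 * (α + δ) - 3 * α * δ - 2 * β1 * (α - δ) := by
    nlinarith [mul_pos (sub_pos.2 h12) hαδ]
  have he1pos : 0 < α * δ * (2 * t - v) + 2 * t * β1 * (α - δ) := by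
    nlinarith [mul_pos (mul_pos hα0 hδ) (by linarith : (0:ℝ) < 2 * t - v),
      mul_nonneg (mul_nonneg (by linarith : (0:ℝ) ≤ 2 * t) hb1) hαδ.le]
  have he12 : α * δ * (2 * t - v) + 2 * t * β1 * (α - δ)
      < α * δ * (2 * t - v) + 2 * t * β2 * (α - δ) := by
    nlinarith [mul_pos (mul_pos ht (sub_pos.2 h12)) hαδ]
  have hL2 : α * δ * (2 * t - v) + 2 * t * β2 * (α - δ)
      < v * (2 * (α + δ) - 3 * α * δ - 2 * β2 * (α - δ)) := by
    nlinarith [hv1',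
      mul_nonneg (mul_nonneg (by linarith : (0:ℝ) ≤ 1 - β2) hαδ.le) (by linarith : (0:ℝ) ≤ t + v),
      mul_pos ht hδ, mul_pos (mul_pos ht hδ) (by linarith : (0:ℝ) < 1 - α)]
  have hax := aux_stmt4 v
    (2 * (α + δ) - 3 * α * δ - 2 * β1 * (α - δ))
    (2 * (α + δ) - 3 * α * δ - 2 * β2 * (α - δ))
    (α * δ * (2 * t - v) + 2 * t * β1 * (α - δ))
    (α * δ * (2 * t - v) + 2 * t * β2 * (α - δ))
    (1 - β2) (1 - β1)
    (by linarith) (by linarith) hd2pos hd21 he1pos he12 hL2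
  simp only [bL]
  rw [div_lt_div_iff₀ (mul_pos ht (pow_pos hd2pos 2)) (mul_pos ht (pow_pos hd1pos 2))]
  have hc : (0:ℝ) < (1 - r) * (α - δ) * t / 4 := by
    have := mul_pos (mul_pos (sub_pos.2 hr1) hαδ) ht
    linarith
  have key := mul_lt_mul_of_pos_left hax hc
  linarith [key]
end

section
/- The equilibrium product price p* is strictly increasing in the targeting precision: given t > 0, 0 < δ < α < 1, and 0 < v < 2t, for all β1, β2 with 0 ≤ β1 < β2 ≤ 1 one has p*(β1) < p*(β2). -/
/-- The equilibrium product price p* is strictly increasing in the targeting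
precision. -/
theorem stmt_5 (t v α δ : ℝ) (ht : 0 < t) (hδ : 0 < δ) (hδα : δ < α) (hα : α < 1)
    (hv0 : 0 < v) (hv2 : v < 2 * t) :
    let p : ℝ → ℝ := fun β =>
      (α * δ * t + v * ((1 - α) * δ + α * (1 - δ)) + β * (α - δ) * (t - v)) /
        (2 * (α + δ) - 3 * α * δ - 2 * β * (α - δ))
    ∀ β1 β2 : ℝ, 0 ≤ β1 → β1 < β2 → β2 ≤ 1 → p β1 < p β2 := by
  intro p β1 β2 h0 h12 h21
  have hD1 : 0 < 2 * (α + δ) - 3 * α * δ - 2 * β1 * (α - δ) := by nlinarith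
  have hD2 : 0 < 2 * (α + δ) - 3 * α * δ - 2 * β2 * (α - δ) := by nlinarith
  show _ / _ < _ / _
  rw [div_lt_div_iff₀ hD1 hD2]
  nlinarith [mul_pos (mul_pos (sub_pos.2 hδα) (sub_pos.2 h12))
    (show 0 < t * (2*α + 2*δ - α*δ) - v * (α*δ) by nlinarith [mul_pos (sub_pos.2 hv2) (mul_pos (hδ.trans hδα) hδ), mul_pos (mul_pos ht (hδ.trans hδα)) (sub_pos.2 (show δ < 1 from hδα.trans hα)), mul_pos (mul_pos ht hδ) (show (0:ℝ) < 2 - α by linarith)])]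
end

section
/- The increase in price due to higher targeting precision is positively moderated by the click-through rate of the more-prominent position: given t > 0, 0 < v < 2t, 0 ≤ β ≤ 1, and 0 < δ < α < 1, the partial derivative with respect to α of g(α, δ, β) = (α−δ)·(α(2−δ)t + δ(2t−αv)) / (2(α+δ) − 3αδ − 2β(α−δ))² is strictly positive. -/
/-!
Writing the price increase as `N(a) / D(a)²`, its derivative is `(N' D - 2 N D') / D³`.
The numerator factors as `δ (δ (2t - v) A + t (4 - 3δ) D₋)`, where
`A = a (6 + 2β - 3δ) - 2δ (1 + β)` and `D₋` is `D` with `β` replaced by `-β`;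
every factor is positive on the parameter region, and so is `D`.
-/

theorem HasDerivAt.div_sq {𝕜 : Type*} [NontriviallyNormedField 𝕜] {f g : 𝕜 → 𝕜} {f' g' x : 𝕜}
    (hf : HasDerivAt f f' x) (hg : HasDerivAt g g' x) (hx : g x ≠ 0) :
    HasDerivAt (fun y => f y / g y ^ 2) ((f' * g x - 2 * f x * g') / g x ^ 3) x := by
  refine (hf.fun_div (hg.fun_pow 2) (pow_ne_zero 2 hx)).congr_deriv ?_
  field_simp
  ring

section PriceIncrease

variable {t v δ β a : ℝ}

theorem price_denom_pos (hδ : 0 < δ) (hδa : δ ≤ a) (ha : a ≤ 1) (hβ : β ≤ 1) :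
    0 < 2 * (a + δ) - 3 * a * δ - 2 * β * (a - δ) := by
  nlinarith [mul_nonneg (sub_nonneg.2 hβ) (sub_nonneg.2 hδa),
    mul_pos hδ (by linarith : (0 : ℝ) < 4 - 3 * a)]

theorem hasDerivAt_price_increase (hD : 2 * (a + δ) - 3 * a * δ - 2 * β * (a - δ) ≠ 0) :
    HasDerivAt (fun a : ℝ =>
      (a - δ) * (a * (2 - δ) * t + δ * (2 * t - a * v)) /
        (2 * (a + δ) - 3 * a * δ - 2 * β * (a - δ)) ^ 2)
      (δ * (δ * (2 * t - v) * (a * (6 + 2 * β - 3 * δ) - 2 * δ * (1 + β)) +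
          t * (4 - 3 * δ) * (2 * (a + δ) - 3 * a * δ + 2 * β * (a - δ))) /
        (2 * (a + δ) - 3 * a * δ - 2 * β * (a - δ)) ^ 3) a := by
  have hN : HasDerivAt (fun a : ℝ => (a - δ) * (a * (2 - δ) * t + δ * (2 * t - a * v)))
      ((2 * a - δ) * ((2 - δ) * t - δ * v) + 2 * δ * t) a := by
    refine (((hasDerivAt_id' a).sub_const δ).fun_mul
      ((((hasDerivAt_id' a).mul_const (2 - δ)).mul_const t).fun_add
        ((((hasDerivAt_id' a).mul_const v).const_sub (2 * t)).const_mul δ))).congr_deriv ?_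
    ring
  have hD' : HasDerivAt (fun a : ℝ => 2 * (a + δ) - 3 * a * δ - 2 * β * (a - δ))
      (2 - 3 * δ - 2 * β) a := by
    refine ((((hasDerivAt_id' a).add_const δ).const_mul 2).fun_sub
      (((hasDerivAt_id' a).const_mul 3).mul_const δ)).fun_sub
        (((hasDerivAt_id' a).sub_const δ).const_mul (2 * β)) |>.congr_deriv ?_
    ring
  refine (hN.div_sq hD' hD).congr_deriv ?_
  ring

end PriceIncrease

theorem stmt_6_general (t v α δ β : ℝ) (ht : 0 < t) (hv2 : v < 2 * t)
    (hβ0 : 0 ≤ β) (hβ1 : β ≤ 1) (hδ : 0 < δ) (hδα : δ < α) (hα : α < 1) :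
    0 < deriv (fun a : ℝ =>
      (a - δ) * (a * (2 - δ) * t + δ * (2 * t - a * v)) /
        (2 * (a + δ) - 3 * a * δ - 2 * β * (a - δ)) ^ 2) α := by
  have hD := price_denom_pos hδ hδα.le hα.le hβ1
  rw [(hasDerivAt_price_increase hD.ne').deriv]
  have hβα : 0 ≤ β * (α - δ) := mul_nonneg hβ0 (by linarith)
  have hA : 0 < α * (6 + 2 * β - 3 * δ) - 2 * δ * (1 + β) := by
    nlinarith [mul_pos (by linarith : (0 : ℝ) < α) (by linarith : (0 : ℝ) < 4 - 3 * δ)]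
  have hDneg : 0 < 2 * (α + δ) - 3 * α * δ + 2 * β * (α - δ) := by
    nlinarith [mul_pos (by linarith : (0 : ℝ) < α) (by linarith : (0 : ℝ) < 1 - δ),
      mul_pos hδ (by linarith : (0 : ℝ) < 2 - α)]
  have h2tv : 0 < 2 * t - v := by linarith
  have h43δ : 0 < 4 - 3 * δ := by linarith
  positivity

/-- The increase in price due to higher targeting precision is positively
moderated by α: the partial derivative with respect to α of
g(α,δ,β) = (α−δ)(α(2−δ)t + δ(2t−αv)) / (2(α+δ) − 3αδ − 2β(α−δ))² is strictly positive. -/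
theorem stmt_6 (t v α δ β : ℝ) (ht : 0 < t) (hv0 : 0 < v) (hv2 : v < 2 * t)
    (hβ0 : 0 ≤ β) (hβ1 : β ≤ 1) (hδ : 0 < δ) (hδα : δ < α) (hα : α < 1) :
    0 < deriv (fun a : ℝ =>
      (a - δ) * (a * (2 - δ) * t + δ * (2 * t - a * v)) /
        (2 * (a + δ) - 3 * a * δ - 2 * β * (a - δ)) ^ 2) α :=
  stmt_6_general t v α δ β ht hv2 hβ0 hβ1 hδ hδα hα
end

section
/- Given t > 0, 0 < δ < α < 1, and 0 < v < 2t, the function L3 is strictly decreasing on [0,1]: for all β1, β2 with 0 ≤ β1 < β2 ≤ 1, L3(β2) < L3(β1). -/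
/-- Given t > 0, 0 < δ < α < 1, and 0 < v < 2t, the function L3 is strictly
decreasing on [0,1]. -/
theorem stmt_8 (t v α δ : ℝ) (ht : 0 < t) (hδ : 0 < δ) (hδα : δ < α) (hα : α < 1)
    (hv0 : 0 < v) (hv2 : v < 2 * t) :
    let L3 : ℝ → ℝ := fun β =>
      α * (v * (1 - β ^ 2) - (3 - β) * β * t) -
        δ * (t * (α * (1 - 2 * β) + β * (1 + β)) - (β + 1) * v * (1 - α + β))
    ∀ β1 β2 : ℝ, 0 ≤ β1 → β1 < β2 → β2 ≤ 1 → L3 β2 < L3 β1 := by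
  intro L3 β1 β2 h1 h12 h2
  simp only [L3]
  set A : ℝ := α*t - α*v - δ*t + δ*v with hA
  set B : ℝ := -3*α*t + 2*δ*t*α - δ*t + 2*δ*v - δ*v*α with hB
  have hBneg : B < 0 := by
    nlinarith [mul_pos (mul_pos hδ (by linarith : (0:ℝ) < 2*t - v)) (by linarith : (0:ℝ) < 2 - α)]
  have h2AB : 2*A + B < 0 := by
    rcases le_or_gt (3*v - t) 0 with h | h
    · nlinarith [mul_pos (mul_pos hδ (by linarith : (0:ℝ) < 2*t - v)) (by linarith : (0:ℝ) < 1 - α),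
        mul_nonpos_of_nonneg_of_nonpos hδ.le h]
    · nlinarith [mul_pos (mul_pos hδ (by linarith : (0:ℝ) < 2*t - v)) (by linarith : (0:ℝ) < 1 - α),
        mul_pos (by linarith : (0:ℝ) < α - δ) h]
  have hs0 : 0 ≤ β1 + β2 := by linarith
  have hs2 : β1 + β2 < 2 := by linarith
  have key : A * (β1 + β2) + B < 0 := by
    rcases le_or_gt A 0 with h | h
    · nlinarith [mul_nonpos_of_nonpos_of_nonneg h hs0]
    · nlinarith [mul_lt_mul_of_pos_left hs2 h]
  nlinarith [mul_pos (by linarith : (0:ℝ) < β2 - β1) (by linarith : (0:ℝ) < -(A*(β1+β2)+B))]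
end

section
/- Under the standing assumptions, the independent advertising firm's expected profit πO is strictly decreasing in the targeting precision: for all β1, β2 with 0 ≤ β1 < β2 ≤ 1, πO(β2) < πO(β1); in particular, β = 0 is the unique maximizer of πO on [0,1]. -/
/-!
Writing `x = D β`, the product `8 (α - δ) L1 L3` is a cubic `c x³ + b x² + p x + q` in `x` with
`c = -(v - t)² ≤ 0`, so `πO` is a positive multiple of `c x + b + p / x + q / x²`, and `D` decreases
from `D 0` to `D 1 = δ (4 - 3α) > 0`. With `c ≤ 0 ≤ p`, that rational function is increasing on
`(0, M]` as soon as its derivative `c - p / M² - 2q / M³` is positive at `M`, since the derivative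
times `x³` decreases in `x`. At `M = D 0` this derivative, times `M³`, factors as
`(2t - v) (v Cv + t Ct)` with polynomials `Cv ≥ 0` and `Ct > 0` in `α, δ`.
-/

open Set

theorem strictMonoOn_cubic_div_sq {c b p q M : ℝ} (hc : c ≤ 0) (hp : 0 ≤ p)
    (hM : 0 < c * M ^ 3 - p * M - 2 * q) :
    StrictMonoOn (fun x => (c * x ^ 3 + b * x ^ 2 + p * x + q) / x ^ 2) (Ioc 0 M) := by
  intro x ⟨hx, hxM⟩ y ⟨hy, hyM⟩ hxy
  have hM0 : 0 < M := hx.trans_le hxM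
  have hq : q < 0 := by nlinarith [pow_pos hM0 3]
  have hxy2 : x * y ^ 2 ≤ M ^ 3 := by
    calc x * y ^ 2 ≤ M * M ^ 2 := by gcongr
      _ = M ^ 3 := by ring
  have hbound : x * (c * M ^ 3 - p * M - 2 * q) ≤ c * x ^ 2 * y ^ 2 - p * x * y - q * (x + y) := by
    nlinarith [mul_le_mul_of_nonpos_left hxy2 hc, mul_le_mul_of_nonneg_left hyM (mul_nonneg hp hx.le)]
  have hform : 0 < c * x ^ 2 * y ^ 2 - p * x * y - q * (x + y) := (mul_pos hx hM).trans_le hbound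
  rw [div_lt_div_iff₀ (by positivity) (by positivity)]
  linear_combination mul_pos (sub_pos.2 hxy) hform

section

variable (t v α δ : ℝ)

def profitCoeff2 : ℝ := (v - t) * (4 * (α * v - δ * t) - 3 * α * δ * (v - t))

def profitCoeff1 : ℝ :=
  α ^ 2 * (δ * (v + t) - 2 * t) * (δ * (v + t) - 6 * t) + 4 * t ^ 2 * δ * (2 * α - δ)

def profitCoeff0 : ℝ :=
  α * (2 * t * (α + δ) - α * δ * (v + t)) *
    (4 * α * δ * v - 3 * α * δ ^ 2 * (v + t) + t * (10 * α * δ - 8 * α + 6 * δ ^ 2 - 8 * δ))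

theorem eight_mul_L1_mul_L3 (β : ℝ) :
    8 * (α - δ) * (α * δ * (t - 2 * v) + v * (α + δ) - β * (α - δ) * (v - t)) *
      (α * (v * (1 - β ^ 2) - (3 - β) * β * t) -
        δ * (t * (α * (1 - 2 * β) + β * (1 + β)) - (β + 1) * v * (1 - α + β))) =
      -(v - t) ^ 2 * (2 * (α + δ) - 3 * α * δ - 2 * β * (α - δ)) ^ 3
        + profitCoeff2 t v α δ * (2 * (α + δ) - 3 * α * δ - 2 * β * (α - δ)) ^ 2
        + profitCoeff1 t v α δ * (2 * (α + δ) - 3 * α * δ - 2 * β * (α - δ))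
        + profitCoeff0 t v α δ := by
  unfold profitCoeff2 profitCoeff1 profitCoeff0
  ring

variable {t v α δ}

theorem profitCoeff1_nonneg (ht : 0 < t) (hδ : 0 < δ) (hδα : δ < α) (hα : α < 1)
    (hv : v < 2 * t) : 0 ≤ profitCoeff1 t v α δ := by
  unfold profitCoeff1
  have hα0 : 0 < α := hδ.trans hδα
  have hcross : 0 < 4 * t ^ 2 * δ * (2 * α - δ) := by
    have : 0 < 2 * α - δ := by linarith
    positivity
  have h6 : δ * (v + t) < 6 * t := by nlinarith
  rcases le_or_gt (δ * (v + t)) (2 * t) with hs | hs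
  · nlinarith [mul_nonneg (mul_nonneg (sq_nonneg α) (sub_nonneg.2 hs)) (sub_pos.2 h6).le]
  · have hαδ : α ^ 2 * (3 * δ - 2) ≤ δ * (2 * α - δ) := by
      nlinarith [mul_pos (mul_pos hα0 hα0) (by linarith : 0 < 1 - δ),
        mul_pos hδ (mul_pos hα0 (sub_pos.2 hα)), mul_pos hδ (sub_pos.2 hδα)]
    have hlo : δ * (v + t) - 2 * t < (3 * δ - 2) * t := by nlinarith
    have hhi : 6 * t - δ * (v + t) ≤ 4 * t := by linarith
    nlinarith [mul_le_mul hlo.le hhi (by linarith) (by nlinarith : 0 ≤ (3 * δ - 2) * t),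
      mul_le_mul_of_nonneg_left hαδ (by positivity : (0 : ℝ) ≤ 4 * t ^ 2)]

theorem profit_slope_at_zero_pos (ht : 0 < t) (hδ : 0 < δ) (hδα : δ < α) (hα : α < 1)
    (hv0 : 0 < v) (hv : v < 2 * t) :
    0 < -(v - t) ^ 2 * (2 * (α + δ) - 3 * α * δ) ^ 3
      - profitCoeff1 t v α δ * (2 * (α + δ) - 3 * α * δ) - 2 * profitCoeff0 t v α δ := by
  have hCv : 0 ≤ 8 * δ ^ 3 + 24 * α * δ ^ 2 - 36 * α * δ ^ 3 + 24 * α ^ 2 * δ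
      - 72 * α ^ 2 * δ ^ 2 + 56 * α ^ 2 * δ ^ 3 + 8 * α ^ 3 - 36 * α ^ 3 * δ
      + 48 * α ^ 3 * δ ^ 2 - 24 * α ^ 3 * δ ^ 3 := by
    nlinarith [mul_nonneg (mul_nonneg (sq_nonneg (α - δ)) hδ.le) (sub_pos.2 hα).le,
      mul_nonneg (sq_nonneg (α - δ)) (sub_pos.2 hα).le,
      mul_nonneg (mul_nonneg (mul_pos hδ hδ).le (sub_pos.2 hα).le) (sub_pos.2 hδα).le,
      mul_nonneg (mul_nonneg (mul_pos hδ hδ).le hδ.le) (sub_pos.2 hα).le,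
      mul_nonneg (mul_nonneg (sq_nonneg (1 - δ)) hδ.le) hδ.le,
      mul_pos (mul_pos hδ hδ) hδ]
  have hCt : 0 < 4 * α ^ 2 * δ * (α * (3 * (δ - 1) ^ 2 + 1) + 4 * δ * (1 - δ)) := by
    have : 0 < α := hδ.trans hδα
    have : 0 < 1 - δ := by linarith
    positivity
  have h2tv : 0 < 2 * t - v := by linarith
  calc
    (0 : ℝ) < (2 * t - v) * (v * (8 * δ ^ 3 + 24 * α * δ ^ 2 - 36 * α * δ ^ 3
          + 24 * α ^ 2 * δ - 72 * α ^ 2 * δ ^ 2 + 56 * α ^ 2 * δ ^ 3 + 8 * α ^ 3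
          - 36 * α ^ 3 * δ + 48 * α ^ 3 * δ ^ 2 - 24 * α ^ 3 * δ ^ 3)
        + t * (4 * α ^ 2 * δ * (α * (3 * (δ - 1) ^ 2 + 1) + 4 * δ * (1 - δ)))) := by
      positivity
    _ = _ := by unfold profitCoeff1 profitCoeff0; ring

end

theorem stmt_9_general (t v α δ r : ℝ) (ht : 0 < t) (hδ : 0 < δ) (hδα : δ < α) (hα : α < 1)
    (hr1 : r < 1)
    (hv1 : t * (α / ((2 - α) * δ) + 1 / 2) < v) (hv2 : v < 2 * t) :
    let D : ℝ → ℝ := fun β => 2 * (α + δ) - 3 * α * δ - 2 * β * (α - δ)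
    let L1 : ℝ → ℝ := fun β => α * δ * (t - 2 * v) + v * (α + δ) - β * (α - δ) * (v - t)
    let L3 : ℝ → ℝ := fun β =>
      α * (v * (1 - β ^ 2) - (3 - β) * β * t) -
        δ * (t * (α * (1 - 2 * β) + β * (1 + β)) - (β + 1) * v * (1 - α + β))
    let πO : ℝ → ℝ := fun β => (1 - r) * L1 β * L3 β * α * (α - δ) / (t * (D β) ^ 2)
    (∀ β1 β2 : ℝ, 0 ≤ β1 → β1 < β2 → β2 ≤ 1 → πO β2 < πO β1) ∧
      (∀ β : ℝ, 0 ≤ β → β ≤ 1 → β ≠ 0 → πO β < πO 0) := by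
  intro D L1 L3 πO
  have hv0 : 0 < v := by
    have : 0 < α / ((2 - α) * δ) := div_pos (hδ.trans hδα) (mul_pos (by linarith) hδ)
    nlinarith
  have hπ : πO = fun β => (1 - r) * α / (8 * t) *
      ((-(v - t) ^ 2 * D β ^ 3 + profitCoeff2 t v α δ * D β ^ 2 + profitCoeff1 t v α δ * D β
        + profitCoeff0 t v α δ) / D β ^ 2) := by
    funext β
    simp only [πO, L1, L3, D]
    rw [← eight_mul_L1_mul_L3]
    field_simp
  have hmono := strictMonoOn_cubic_div_sq (b := profitCoeff2 t v α δ)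
    (neg_nonpos.2 (sq_nonneg (v - t))) (profitCoeff1_nonneg ht hδ hδα hα hv2)
    (profit_slope_at_zero_pos ht hδ hδα hα hv0 hv2)
  have hD : StrictAntiOn D (Icc 0 1) := fun β1 _ β2 _ h12 => by
    simp only [D]; nlinarith
  have hmaps : MapsTo D (Icc 0 1) (Ioc 0 (2 * (α + δ) - 3 * α * δ)) := fun β ⟨h0, h1⟩ => by
    constructor <;> simp only [D] <;> nlinarith
  have hK : 0 < (1 - r) * α / (8 * t) := by
    have : 0 < 1 - r := by linarith
    have : 0 < α := hδ.trans hδα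
    positivity
  have hanti : StrictAntiOn πO (Icc 0 1) := by
    rw [hπ]
    exact (strictMono_mul_left_of_pos hK).comp_strictAntiOn (hmono.comp_strictAntiOn hD hmaps)
  exact ⟨fun β1 β2 h0 h12 h1 => hanti ⟨h0, by linarith⟩ ⟨by linarith, h1⟩ h12,
    fun β h0 h1 hne => hanti ⟨le_rfl, zero_le_one⟩ ⟨h0, h1⟩ (lt_of_le_of_ne h0 (Ne.symm hne))⟩

/-- Under the standing assumptions, the independent advertising firm's expected
profit πO is strictly decreasing in the targeting precision; in particular, β = 0 is the
unique maximizer of πO on [0,1]. -/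
theorem stmt_9 (t v α δ r : ℝ) (ht : 0 < t) (hδ : 0 < δ) (hδα : δ < α) (hα : α < 1)
    (hr0 : 0 < r) (hr1 : r < 1)
    (hv1 : t * (α / ((2 - α) * δ) + 1 / 2) < v) (hv2 : v < 2 * t) :
    let D : ℝ → ℝ := fun β => 2 * (α + δ) - 3 * α * δ - 2 * β * (α - δ)
    let L1 : ℝ → ℝ := fun β => α * δ * (t - 2 * v) + v * (α + δ) - β * (α - δ) * (v - t)
    let L3 : ℝ → ℝ := fun β =>
      α * (v * (1 - β ^ 2) - (3 - β) * β * t) -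
        δ * (t * (α * (1 - 2 * β) + β * (1 + β)) - (β + 1) * v * (1 - α + β))
    let πO : ℝ → ℝ := fun β => (1 - r) * L1 β * L3 β * α * (α - δ) / (t * (D β) ^ 2)
    (∀ β1 β2 : ℝ, 0 ≤ β1 → β1 < β2 → β2 ≤ 1 → πO β2 < πO β1) ∧
      (∀ β : ℝ, 0 ≤ β → β ≤ 1 → β ≠ 0 → πO β < πO 0) :=
  stmt_9_general t v α δ r ht hδ hδα hα hr1 hv1 hv2
end

section
/- Under the standing assumptions, a seller's expected profit from product sales is strictly increasing in the targeting precision: for all β1, β2 with 0 ≤ β1 < β2 ≤ 1, πAC(β1) < πAC(β2). -/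
/-!
Put `k = αδ`, `m = (v - t)/2`, `c = t(α + δ) - αδ(t + v)/2` and let `D = D(β)`.
Then `L1 = c + mD` and `α(1 - β) + δ(1 - α + β) = (D + k)/2`, so `πAC` is a
positive multiple of `(c + mD)² (D + k) / D² = (c²/D + m²D) + 2cm + k (c/D + m)²`.
`D` decreases in `β`, and both summands decrease in `D` as long as `mD < c`: the first because
`c² > m² D₁ D₂`, the second because `c/D + m` is positive and decreasing. The bound `mD < c`
follows from `v < 2t`, and `m ≥ 0` from the lower bound on `v`.
-/

noncomputable def profitOfDenom (c m k D : ℝ) : ℝ :=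
  (c + m * D) ^ 2 * (D + k) / D ^ 2

lemma profitOfDenom_eq {D : ℝ} (c m k : ℝ) (hD : D ≠ 0) :
    profitOfDenom c m k D =
      c ^ 2 / D + m ^ 2 * D + 2 * c * m + k * (c / D + m) ^ 2 := by
  unfold profitOfDenom
  field_simp
  ring

lemma sq_div_add_sq_mul_lt {c m D₁ D₂ : ℝ} (hD₂ : 0 < D₂) (hD : D₂ < D₁) (hm : 0 ≤ m)
    (hc : m * D₁ < c) :
    c ^ 2 / D₁ + m ^ 2 * D₁ < c ^ 2 / D₂ + m ^ 2 * D₂ := by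
  have hD₁ : 0 < D₁ := hD₂.trans hD
  have hcm : m ^ 2 * (D₁ * D₂) < c ^ 2 := by
    have h₁ : m * D₂ ≤ m * D₁ := mul_le_mul_of_nonneg_left hD.le hm
    nlinarith [mul_nonneg hm hD₂.le]
  have key : c ^ 2 / D₂ + m ^ 2 * D₂ - (c ^ 2 / D₁ + m ^ 2 * D₁)
      = (D₁ - D₂) * (c ^ 2 - m ^ 2 * (D₁ * D₂)) / (D₁ * D₂) := by
    field_simp
    ring
  have : 0 < (D₁ - D₂) * (c ^ 2 - m ^ 2 * (D₁ * D₂)) / (D₁ * D₂) :=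
    div_pos (mul_pos (sub_pos.2 hD) (sub_pos.2 hcm)) (mul_pos hD₁ hD₂)
  linarith

lemma profitOfDenom_lt {c m k D₁ D₂ : ℝ} (hk : 0 ≤ k) (hD₂ : 0 < D₂) (hD : D₂ < D₁)
    (hm : 0 ≤ m) (hc : m * D₁ < c) :
    profitOfDenom c m k D₁ < profitOfDenom c m k D₂ := by
  have hD₁ : 0 < D₁ := hD₂.trans hD
  have hc₀ : 0 ≤ c := (mul_nonneg hm hD₁.le).trans hc.le
  rw [profitOfDenom_eq c m k hD₁.ne', profitOfDenom_eq c m k hD₂.ne']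
  have hsq : (c / D₁ + m) ^ 2 ≤ (c / D₂ + m) ^ 2 := by
    have : c / D₁ ≤ c / D₂ := div_le_div_of_nonneg_left hc₀ hD₂ hD.le
    gcongr
  have := sq_div_add_sq_mul_lt hD₂ hD hm hc
  linarith [mul_le_mul_of_nonneg_left hsq hk]

lemma div_eq_profitOfDenom {r t c m k D L N : ℝ} (hL : L = c + m * D) (hN : N = (D + k) / 2) :
    (1 - r) * L ^ 2 * N / (2 * t * D ^ 2) = (1 - r) / (4 * t) * profitOfDenom c m k D := by
  subst hL hN
  unfold profitOfDenom
  ring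

theorem stmt_10_general (t v α δ r : ℝ) (ht : 0 < t) (hδ : 0 < δ) (hδα : δ < α) (hα : α < 1)
    (hr1 : r < 1)
    (hv1 : t * (α / ((2 - α) * δ) + 1 / 2) < v) (hv2 : v < 2 * t) :
    let πAC : ℝ → ℝ := fun β =>
      (1 - r) * (α * δ * (t - 2 * v) + v * (α + δ) - β * (α - δ) * (v - t)) ^ 2 *
        (α * (1 - β) + δ * (1 - α + β)) /
        (2 * t * (2 * (α + δ) - 3 * α * δ - 2 * β * (α - δ)) ^ 2)
    ∀ β1 β2 : ℝ, 0 ≤ β1 → β1 < β2 → β2 ≤ 1 → πAC β1 < πAC β2 := by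
  intro πAC β1 β2 hβ1 hβ12 hβ2
  have hπ (β : ℝ) : πAC β = (1 - r) / (4 * t) *
      profitOfDenom (t * (α + δ) - α * δ * (t + v) / 2) ((v - t) / 2) (α * δ)
        (2 * (α + δ) - 3 * α * δ - 2 * β * (α - δ)) :=
    div_eq_profitOfDenom (by ring) (by ring)
  have hvt : t < v := by
    have : 1 / 2 < α / ((2 - α) * δ) := by
      rw [lt_div_iff₀ (by nlinarith)]
      nlinarith
    nlinarith
  rw [hπ, hπ]
  refine mul_lt_mul_of_pos_left
    (profitOfDenom_lt (mul_pos (hδ.trans hδα) hδ).le ?denom_pos ?denom_lt (by linarith) ?below)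
    (div_pos (by linarith) (by linarith))
  case denom_pos =>
    nlinarith [mul_nonneg (by linarith : (0 : ℝ) ≤ 1 - β2) (sub_pos.2 hδα).le]
  case denom_lt =>
    nlinarith [mul_pos (sub_pos.2 hβ12) (sub_pos.2 hδα)]
  case below =>
    have : 0 < (2 * t - v) * (α + δ - α * δ) := mul_pos (by linarith) (by nlinarith)
    nlinarith [mul_nonneg (mul_nonneg (sub_pos.2 hvt).le hβ1) (sub_pos.2 hδα).le]

/-- Under the standing assumptions, a seller's expected profit from product
sales is strictly increasing in the targeting precision. -/
theorem stmt_10 (t v α δ r : ℝ) (ht : 0 < t) (hδ : 0 < δ) (hδα : δ < α) (hα : α < 1)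
    (hr0 : 0 < r) (hr1 : r < 1)
    (hv1 : t * (α / ((2 - α) * δ) + 1 / 2) < v) (hv2 : v < 2 * t) :
    let πAC : ℝ → ℝ := fun β =>
      (1 - r) * (α * δ * (t - 2 * v) + v * (α + δ) - β * (α - δ) * (v - t)) ^ 2 *
        (α * (1 - β) + δ * (1 - α + β)) /
        (2 * t * (2 * (α + δ) - 3 * α * δ - 2 * β * (α - δ)) ^ 2)
    ∀ β1 β2 : ℝ, 0 ≤ β1 → β1 < β2 → β2 ≤ 1 → πAC β1 < πAC β2 :=
  stmt_10_general t v α δ r ht hδ hδα hα hr1 hv1 hv2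
end

section
/- Under the standing assumptions, the equilibrium consumer surplus CS is a strictly concave function of the targeting precision: its second derivative with respect to β is strictly negative for every β with 0 ≤ β ≤ 1. -/
/-!
Write `D(β)` for the denominator of the equilibrium price and `r = 2(α+δ)t - αδ(t+v)`.
Then `p*(β) = (v - t)/2 + r/(2D(β))`, and `β` itself is affine in `D(β)`, so the consumer
surplus is a Laurent polynomial `a D + b + c/D + d/D²` in `D` with
`c = r (αδ(v+5t) - 6(α+δ)t)/(16t)` and `d = -αδ r²/(16t)`. Since `D` is affine in `β` with slope
`-2(α-δ)`, `CS'' = 4(α-δ)² (2cD + 6d)/D⁴`. For `v < 2t` we have `r > 0` and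
`αδ(v+5t) < 6(α+δ)t`, hence `c, d < 0`, while `D > 0` for `β ≤ 1`.
-/

open Filter Topology

theorem deriv_deriv_laurent {L : ℝ → ℝ} {m : ℝ} (hL : ∀ y, HasDerivAt L m y) (a b c d : ℝ)
    {x : ℝ} (hx : L x ≠ 0) :
    deriv (deriv fun y => a * L y + b + c / L y + d / L y ^ 2) x =
      m ^ 2 * (2 * c * L x + 6 * d) / L x ^ 4 := by
  have hderiv : ∀ y, L y ≠ 0 → HasDerivAt (fun y => a * L y + b + c / L y + d / L y ^ 2)
      (a * m - c * m / L y ^ 2 - 2 * d * m / L y ^ 3) y := fun y hy => by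
    refine ((((hL y).const_mul a).add_const b).fun_add
      ((hasDerivAt_const y c).fun_div (hL y) hy)).fun_add
      ((hasDerivAt_const y d).fun_div ((hL y).fun_pow 2) (pow_ne_zero 2 hy)) |>.congr_deriv ?_
    field_simp
    ring
  have hderiv₂ : HasDerivAt (fun y => a * m - c * m / L y ^ 2 - 2 * d * m / L y ^ 3)
      (m ^ 2 * (2 * c * L x + 6 * d) / L x ^ 4) x := by
    refine ((hasDerivAt_const x (a * m)).fun_sub
      ((hasDerivAt_const x (c * m)).fun_div ((hL x).fun_pow 2) (pow_ne_zero 2 hx))).fun_sub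
      ((hasDerivAt_const x (2 * d * m)).fun_div ((hL x).fun_pow 3) (pow_ne_zero 3 hx))
      |>.congr_deriv ?_
    field_simp
    ring
  have hnear : ∀ᶠ y in 𝓝 x, L y ≠ 0 := (hL x).continuousAt.eventually_ne hx
  rw [← hderiv₂.deriv]
  exact EventuallyEq.deriv_eq (hnear.mono fun y hy => (hderiv y hy).deriv)

noncomputable def priceDenominator (α δ β : ℝ) : ℝ := 2 * (α + δ) - 3 * α * δ - 2 * β * (α - δ)

noncomputable def equilibriumPrice (t v α δ β : ℝ) : ℝ :=
  (α * δ * t + v * ((1 - α) * δ + α * (1 - δ)) + β * (α - δ) * (t - v)) / priceDenominator α δ β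

noncomputable def consumerSurplus (t v α δ β : ℝ) : ℝ :=
  let P := equilibriumPrice t v α δ β
  (β * ((1 - α) * δ * (2 * P + t - 2 * v) ^ 2 + α * t * (4 * v - 4 * P - t)) +
    (1 - β) * (2 * δ * (P - v) ^ 2 + 2 * α * (P - v) ^ 2 - α * δ * (2 * P + t - 2 * v) ^ 2)) /
    (4 * t)

section

variable (t v α δ : ℝ)

theorem hasDerivAt_priceDenominator (β : ℝ) :
    HasDerivAt (priceDenominator α δ) (-2 * (α - δ)) β := by
  refine ((hasDerivAt_id β).const_mul (2 : ℝ) |>.mul_const (α - δ) |>.const_sub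
    (2 * (α + δ) - 3 * α * δ)).congr_deriv ?_
  ring

theorem equilibriumPrice_eq {β : ℝ} (hD : priceDenominator α δ β ≠ 0) :
    equilibriumPrice t v α δ β =
      (v - t) / 2 + (2 * (α + δ) * t - α * δ * (t + v)) / (2 * priceDenominator α δ β) := by
  unfold equilibriumPrice
  field_simp
  unfold priceDenominator
  ring

theorem consumerSurplus_eq_laurent {β : ℝ} (ht : t ≠ 0) (hD : priceDenominator α δ β ≠ 0) :
    consumerSurplus t v α δ β =
      -(t ^ 2 + 2 * t * v - v ^ 2) / (16 * t) * priceDenominator α δ β +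
      ((α + δ) * (t + v) ^ 2 / 2 - α * δ * v ^ 2 +
        (2 * (α + δ) - 3 * α * δ) * (t ^ 2 + 2 * t * v - v ^ 2) / 4 -
        (v - t) * (2 * (α + δ) * t - α * δ * (t + v)) / 2) / (4 * t) +
      (2 * (α + δ) * t - α * δ * (t + v)) * (α * δ * (v + 5 * t) - 6 * (α + δ) * t) / (16 * t) /
        priceDenominator α δ β +
      -(α * δ * (2 * (α + δ) * t - α * δ * (t + v)) ^ 2) / (16 * t) / priceDenominator α δ β ^ 2 := by
  simp only [consumerSurplus, equilibriumPrice_eq t v α δ hD]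
  field_simp
  unfold priceDenominator
  ring

theorem deriv_deriv_consumerSurplus {β : ℝ} (ht : t ≠ 0) (hD : priceDenominator α δ β ≠ 0) :
    deriv (deriv (consumerSurplus t v α δ)) β =
      (α - δ) ^ 2 * (2 * (α + δ) * t - α * δ * (t + v)) *
        ((α * δ * (v + 5 * t) - 6 * (α + δ) * t) * priceDenominator α δ β -
          3 * α * δ * (2 * (α + δ) * t - α * δ * (t + v))) /
        (2 * t * priceDenominator α δ β ^ 4) := by
  have hnear : ∀ᶠ y in 𝓝 β, priceDenominator α δ y ≠ 0 :=
    (hasDerivAt_priceDenominator α δ β).continuousAt.eventually_ne hD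
  have hlaurent := hnear.mono fun y hy => consumerSurplus_eq_laurent t v α δ ht hy
  rw [EventuallyEq.deriv_eq (EventuallyEq.deriv hlaurent),
    deriv_deriv_laurent (hasDerivAt_priceDenominator α δ) _ _ _ _ hD]
  field_simp
  ring

end

theorem stmt_12_general (t v α δ : ℝ) (ht : 0 < t) (hδ : 0 < δ) (hδα : δ < α) (hα : α < 1)
    (hv2 : v < 2 * t)
    (β : ℝ) (hβ1 : β ≤ 1) :
    let CS : ℝ → ℝ := fun b =>
      let P := (α * δ * t + v * ((1 - α) * δ + α * (1 - δ)) + b * (α - δ) * (t - v)) /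
        (2 * (α + δ) - 3 * α * δ - 2 * b * (α - δ))
      (b * ((1 - α) * δ * (2 * P + t - 2 * v) ^ 2 + α * t * (4 * v - 4 * P - t)) +
        (1 - b) * (2 * δ * (P - v) ^ 2 + 2 * α * (P - v) ^ 2 -
          α * δ * (2 * P + t - 2 * v) ^ 2)) / (4 * t)
    deriv (deriv CS) β < 0 := by
  intro CS
  show deriv (deriv (consumerSurplus t v α δ)) β < 0
  have hα₀ : 0 < α := hδ.trans hδα
  have hαδ : 0 < α * δ := mul_pos hα₀ hδ
  have hD : 0 < priceDenominator α δ β := by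
    unfold priceDenominator
    nlinarith [mul_le_mul_of_nonneg_right hβ1 (sub_pos.2 hδα).le, mul_pos hδ (sub_pos.2 hα)]
  have hr : 0 < 2 * (α + δ) * t - α * δ * (t + v) := by
    nlinarith [mul_pos ht (mul_pos hδ (sub_pos.2 hα)), mul_lt_mul_of_pos_left hv2 hαδ]
  have hcoeff : α * δ * (v + 5 * t) - 6 * (α + δ) * t < 0 := by
    nlinarith [mul_pos ht (mul_pos hδ (sub_pos.2 hα)), mul_lt_mul_of_pos_left hv2 hαδ]
  rw [deriv_deriv_consumerSurplus t v α δ ht.ne' hD.ne']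
  refine div_neg_of_neg_of_pos (mul_neg_of_pos_of_neg (by positivity) ?_) (by positivity)
  nlinarith [mul_neg_of_neg_of_pos hcoeff hD, mul_pos hαδ hr]

/-- Under the standing assumptions, the equilibrium consumer surplus CS is a
strictly concave function of the targeting precision: its second derivative with respect to β
is strictly negative for every β with 0 ≤ β ≤ 1. -/
theorem stmt_12 (t v α δ : ℝ) (ht : 0 < t) (hδ : 0 < δ) (hδα : δ < α) (hα : α < 1)
    (hv1 : t * (α / ((2 - α) * δ) + 1 / 2) < v) (hv2 : v < 2 * t)
    (β : ℝ) (hβ0 : 0 ≤ β) (hβ1 : β ≤ 1) :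
    let CS : ℝ → ℝ := fun b =>
      let P := (α * δ * t + v * ((1 - α) * δ + α * (1 - δ)) + b * (α - δ) * (t - v)) /
        (2 * (α + δ) - 3 * α * δ - 2 * b * (α - δ))
      (b * ((1 - α) * δ * (2 * P + t - 2 * v) ^ 2 + α * t * (4 * v - 4 * P - t)) +
        (1 - b) * (2 * δ * (P - v) ^ 2 + 2 * α * (P - v) ^ 2 -
          α * δ * (2 * P + t - 2 * v) ^ 2)) / (4 * t)
    deriv (deriv CS) β < 0 :=
  stmt_12_general t v α δ ht hδ hδα hα hv2 β hβ1
end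

section
/- Given 0 < δ < α < 1, 0 ≤ β ≤ 1, t > 0, and 0 < v < 2t, the quantity Z1 is strictly positive, where Z1 = t·(2α²(1−β)(2−β) + δ²·(5α² − α(7β+8) + 2(β+1)(β+2)) + αδ·(8 − α(8−7β) − 4β²)) − v·(2α²(1−β)² + δ²·(4α² − 5α(β+1) + 2(β+1)²) + αδ·(5αβ − 5α − 4β² + 4)). -/
lemma aux_B_pos (α δ β : ℝ) (hβ0 : 0 ≤ β) (hβ1 : β ≤ 1) (hδ : 0 < δ)
    (hδα : δ < α) (hα : α < 1) :
    0 < 2 * α ^ 2 * (1 - β) ^ 2 +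
        δ ^ 2 * (4 * α ^ 2 - 5 * α * (β + 1) + 2 * (β + 1) ^ 2) +
        α * δ * (5 * α * β - 5 * α - 4 * β ^ 2 + 4) := by
  have hα0 : 0 < α := hδ.trans hδα
  nlinarith [sq_nonneg (4 * α ^ 2 * (1 - β) + α * δ * (4 * (β + 1) - 5 * α)),
    mul_pos (mul_pos hα0 hα0) (mul_pos hδ hδ), mul_pos hα0 hα0]

lemma aux_A2B (α δ β : ℝ) (hβ0 : 0 ≤ β) (hβ1 : β ≤ 1) (hδ : 0 < δ)
    (hδα : δ < α) (hα : α < 1) :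
    0 ≤ (2 * α ^ 2 * (1 - β) * (2 - β) +
          δ ^ 2 * (5 * α ^ 2 - α * (7 * β + 8) + 2 * (β + 1) * (β + 2)) +
          α * δ * (8 - α * (8 - 7 * β) - 4 * β ^ 2)) -
        2 * (2 * α ^ 2 * (1 - β) ^ 2 +
          δ ^ 2 * (4 * α ^ 2 - 5 * α * (β + 1) + 2 * (β + 1) ^ 2) +
          α * δ * (5 * α * β - 5 * α - 4 * β ^ 2 + 4)) := by
  nlinarith [sq_nonneg (α - δ), sq_nonneg (α * (1 - β) - δ), mul_pos hδ (hδ.trans hδα),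
    mul_pos hδ (sub_pos.mpr hδα), mul_nonneg hβ0 (sub_nonneg.mpr hβ1),
    mul_pos (mul_pos hδ hδ) (sub_pos.mpr hα), sq_nonneg (1 - β),
    mul_nonneg (mul_nonneg hβ0 (sub_nonneg.mpr hβ1)) (mul_pos hδ (hδ.trans hδα)).le,
    mul_nonneg (mul_pos hδ (sub_pos.mpr hδα)).le hβ0]

/-- Given 0 < δ < α < 1, 0 ≤ β ≤ 1, t > 0, and 0 < v < 2t, the quantity Z1
is strictly positive. -/
theorem stmt_15 (t v α δ β : ℝ) (ht : 0 < t) (hv0 : 0 < v) (hv2 : v < 2 * t)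
    (hβ0 : 0 ≤ β) (hβ1 : β ≤ 1) (hδ : 0 < δ) (hδα : δ < α) (hα : α < 1) :
    0 < t * (2 * α ^ 2 * (1 - β) * (2 - β) +
          δ ^ 2 * (5 * α ^ 2 - α * (7 * β + 8) + 2 * (β + 1) * (β + 2)) +
          α * δ * (8 - α * (8 - 7 * β) - 4 * β ^ 2)) -
        v * (2 * α ^ 2 * (1 - β) ^ 2 +
          δ ^ 2 * (4 * α ^ 2 - 5 * α * (β + 1) + 2 * (β + 1) ^ 2) +
          α * δ * (5 * α * β - 5 * α - 4 * β ^ 2 + 4)) := by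
  have hB := aux_B_pos α δ β hβ0 hβ1 hδ hδα hα
  have hA := aux_A2B α δ β hβ0 hβ1 hδ hδα hα
  nlinarith [mul_nonneg ht.le hA, mul_pos (sub_pos.mpr hv2) hB]
end

section
/- Under the standing assumptions, for every β with 0 ≤ β ≤ 1 the integrated platform's expected total profit is strictly positive: πR(β) = L1(β)·((1−r)·L3(β)·α·(α−δ) + r·L1(β)·(α(1−β) + δ(1−α+β))) / (t·D(β)²) > 0, and moreover both the commission component r·L1(β)²·(α(1−β)+δ(1−α+β))/(t·D(β)²) and the advertising-fee component (1−r)·L1(β)·L3(β)·α·(α−δ)/(t·D(β)²) are strictly positive. -/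
/-- Under the standing assumptions, for every β with 0 ≤ β ≤ 1 the integrated
platform's expected total profit πR(β) is strictly positive, and both the commission component
and the advertising-fee component are strictly positive. -/
theorem stmt_19 (t v α δ r : ℝ) (ht : 0 < t) (hδ : 0 < δ) (hδα : δ < α) (hα : α < 1)
    (hr0 : 0 < r) (hr1 : r < 1)
    (hv1 : t * (α / ((2 - α) * δ) + 1 / 2) < v) (hv2 : v < 2 * t)
    (β : ℝ) (hβ0 : 0 ≤ β) (hβ1 : β ≤ 1) :
    let D := 2 * (α + δ) - 3 * α * δ - 2 * β * (α - δ)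
    let L1 := α * δ * (t - 2 * v) + v * (α + δ) - β * (α - δ) * (v - t)
    let L3 := α * (v * (1 - β ^ 2) - (3 - β) * β * t) -
      δ * (t * (α * (1 - 2 * β) + β * (1 + β)) - (β + 1) * v * (1 - α + β))
    0 < L1 * ((1 - r) * L3 * α * (α - δ) + r * L1 * (α * (1 - β) + δ * (1 - α + β))) /
        (t * D ^ 2) ∧
      0 < r * L1 ^ 2 * (α * (1 - β) + δ * (1 - α + β)) / (t * D ^ 2) ∧
      0 < (1 - r) * L1 * L3 * α * (α - δ) / (t * D ^ 2) := by
  intro D L1 L3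
  have hden : (0:ℝ) < (2 - α) * δ := by nlinarith
  have key : t * α < (v - t / 2) * ((2 - α) * δ) := by
    rw [← div_lt_iff₀ hden]
    have h : t * (α / ((2 - α) * δ)) + t * (1 / 2) < v := by
      have := mul_add t (α / ((2 - α) * δ)) (1 / 2 : ℝ)
      linarith [hv1]
    rw [mul_div_assoc] at *
    linarith
  have hvt : t < v := by nlinarith [key, hden, mul_pos ht hδ, mul_pos ht (sub_pos.mpr hδα)]
  have hL1 : 0 < L1 := by
    show (0:ℝ) < α * δ * (t - 2 * v) + v * (α + δ) - β * (α - δ) * (v - t)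
    nlinarith [mul_pos hδ ht, mul_pos hδ (sub_pos.mpr hvt), mul_nonneg hβ0 (mul_pos hδ ht).le,
      mul_nonneg (sub_nonneg.mpr hβ1) (mul_pos (sub_pos.mpr hδα) (sub_pos.mpr hvt)).le]
  have hD : 0 < D := by
    show (0:ℝ) < 2 * (α + δ) - 3 * α * δ - 2 * β * (α - δ)
    nlinarith [mul_nonneg (sub_nonneg.mpr hβ1) (sub_pos.mpr hδα).le]
  have hC : 0 < α * (1 - β) + δ * (1 - α + β) := by nlinarith
  have h0 : 0 < α * v + δ * v * (1 - α) - α * δ * t := by nlinarith [mul_pos hδ (sub_pos.mpr hvt)]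
  have h1 : 0 < 2 * δ * v * (2 - α) - 2 * α * t + α * δ * t - 2 * δ * t := by nlinarith [key]
  have hL3 : 0 < L3 := by
    show (0:ℝ) < α * (v * (1 - β ^ 2) - (3 - β) * β * t) -
      δ * (t * (α * (1 - 2 * β) + β * (1 + β)) - (β + 1) * v * (1 - α + β))
    nlinarith [mul_nonneg (sub_nonneg.mpr hβ1) h0.le, mul_nonneg hβ0 h1.le,
      mul_nonneg (mul_nonneg hβ0 (sub_nonneg.mpr hβ1))
        (mul_pos (sub_pos.mpr hδα) (sub_pos.mpr hvt)).le]
  have htD : 0 < t * D ^ 2 := by positivity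
  have hαδ : 0 < α - δ := sub_pos.mpr hδα
  refine ⟨?_, ?_, ?_⟩
  · apply div_pos _ htD
    have : 0 < (1 - r) * L3 * α * (α - δ) + r * L1 * (α * (1 - β) + δ * (1 - α + β)) := by
      have h1 : 0 < (1 - r) * L3 * α * (α - δ) := mul_pos (mul_pos (mul_pos (by linarith) hL3) (by linarith)) hαδ
      have h2 : 0 < r * L1 * (α * (1 - β) + δ * (1 - α + β)) := mul_pos (mul_pos hr0 hL1) hC
      linarith
    exact mul_pos hL1 this
  · exact div_pos (mul_pos (mul_pos hr0 (pow_pos hL1 2)) hC) htD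
  · exact div_pos (mul_pos (mul_pos (mul_pos (mul_pos (by linarith : (0:ℝ) < 1 - r) hL1) hL3) (by linarith : (0:ℝ) < α)) hαδ) htD
end
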